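/- Let R be a ring, v an idempotent, and Rv/N a simple left R-module. The cardinality of the set of maximal R-submodules N' of Rv such that Rv/N' ≅ Rv/N is at most the cardinality of vRv. -/
import Mathlib


/-- A left ideal of a (possibly non-unital) ring, given as a set. -/
def IsLeftIdeal {R : Type*} [NonUnitalRing R] (I : Set R) : Prop :=
  (0 : R) ∈ I ∧ (∀ x ∈ I, ∀ y ∈ I, x + y ∈ I) ∧ (∀ x ∈ I, -x ∈ I) ∧
    ∀ (r : R), ∀ x ∈ I, r * x ∈ I

/-- A maximal left ideal of `R`. -/
def IsMaxLeftIdeal {R : Type*} [NonUnitalRing R] (M : Set R) : Prop :=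
  IsLeftIdeal M ∧ M ≠ Set.univ ∧
    ∀ J : Set R, IsLeftIdeal J → M ⊆ J → J = M ∨ J = Set.univ

/-- `N` is a maximal `R`-submodule of the left ideal with underlying set `U`. -/
def IsMaxSub {R : Type*} [NonUnitalRing R] (N U : Set R) : Prop :=
  IsLeftIdeal N ∧ N ⊆ U ∧ N ≠ U ∧
    ∀ J : Set R, IsLeftIdeal J → N ⊆ J → J ⊆ U → J = N ∨ J = U

/-- The set `Rv = {rv : r ∈ R}`. -/
def Rset {R : Type*} [NonUnitalRing R] (v : R) : Set R := {x : R | ∃ t : R, x = t * v}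

/-- `QuotIso U N₁ V N₂` says that the quotient left `R`-modules `U/N₁` and `V/N₂`
are isomorphic: there is a map `f` carrying `U` into `V` which is additive and
`R`-linear modulo `N₂`, surjective onto `V` modulo `N₂`, and whose kernel on `U`
is exactly `N₁`. -/
def QuotIso {R : Type*} [NonUnitalRing R] (U N₁ V N₂ : Set R) : Prop :=
  ∃ f : R → R,
    (∀ x ∈ U, f x ∈ V) ∧
    (∀ x ∈ U, ∀ y ∈ U, f (x + y) - (f x + f y) ∈ N₂) ∧
    (∀ (r : R), ∀ x ∈ U, f (r * x) - r * f x ∈ N₂) ∧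
    (∀ y ∈ V, ∃ x ∈ U, f x - y ∈ N₂) ∧
    (∀ x ∈ U, (x ∈ N₁ ↔ f x ∈ N₂))

/-- For an idempotent `v` and a simple left module `Rv/N`, the set of maximal
`R`-submodules `N'` of `Rv` with `Rv/N' ≅ Rv/N` has cardinality at most that of
`vRv = {vxv : x ∈ R}`. -/
theorem card_iso_submodules_le_corner {R : Type*} [NonUnitalRing R]
    (v : R) (hv : v * v = v) (N : Set R) (hN : IsMaxSub N (Rset v)) :
    Cardinal.mk {N' : Set R // IsMaxSub N' (Rset v) ∧ QuotIso (Rset v) N' (Rset v) N}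
      ≤ Cardinal.mk {x : R // ∃ t : R, x = v * t * v} := by
  classical
  have hvmem : v ∈ Rset v := ⟨v, hv.symm⟩
  have hsub : ∀ a ∈ N, ∀ b ∈ N, a - b ∈ N := by
    intro a ha b hb
    have := hN.1.2.1 a ha (-b) (hN.1.2.2.1 b hb)
    rwa [← sub_eq_add_neg] at this
  have key : ∀ p : {N' : Set R // IsMaxSub N' (Rset v) ∧ QuotIso (Rset v) N' (Rset v) N},
      ∃ w : R, (∃ t, w = v * t * v) ∧ ∀ x ∈ Rset v, (x ∈ p.1 ↔ x * w ∈ N) := by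
    rintro ⟨N', hmax, f, hfV, _hadd, hlin, _hsurj, hker⟩
    obtain ⟨t, ht⟩ := hfV v hvmem
    refine ⟨v * t * v, ⟨t, rfl⟩, ?_⟩
    rintro x ⟨s, rfl⟩
    have h1 : f (s * v) - s * f v ∈ N := hlin s v hvmem
    have h2 : f v - v * f v ∈ N := by
      have := hlin v v hvmem
      rwa [hv] at this
    have h3 : s * (f v - v * f v) ∈ N := hN.1.2.2.2 s _ h2
    have h3' : s * f v - s * (v * f v) ∈ N := by rwa [mul_sub] at h3
    have hassoc : s * v * (v * t * v) = s * (v * f v) := by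
      rw [ht, ← mul_assoc, ← mul_assoc, mul_assoc s v v, hv, mul_assoc, mul_assoc]
    have hdiff : f (s * v) - s * v * (v * t * v) ∈ N := by
      have := hN.1.2.1 _ h1 _ h3'
      rw [sub_add_sub_cancel] at this
      rwa [hassoc]
    rw [hker (s * v) ⟨s, rfl⟩]
    constructor
    · intro hf
      have := hsub _ hf _ hdiff
      simpa using this
    · intro hw
      have := hN.1.2.1 _ hdiff _ hw
      simpa using this
  choose w hw1 hw2 using key
  have hinj : Function.Injective
      (fun p : {N' : Set R // IsMaxSub N' (Rset v) ∧ QuotIso (Rset v) N' (Rset v) N} =>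
        (⟨w p, hw1 p⟩ : {x : R // ∃ t : R, x = v * t * v})) := by
    intro p q hpq
    have hwpq : w p = w q := congrArg Subtype.val hpq
    apply Subtype.ext
    ext x
    constructor
    · intro hx
      have hxR : x ∈ Rset v := p.2.1.2.1 hx
      exact (hw2 q x hxR).2 (hwpq ▸ (hw2 p x hxR).1 hx)
    · intro hx
      have hxR : x ∈ Rset v := q.2.1.2.1 hx
      exact (hw2 p x hxR).2 (hwpq ▸ (hw2 q x hxR).1 hx)
  exact Cardinal.mk_le_of_injective hinj
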